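/- arXiv:2001.04703 — 7 statements merged into one kernel-verified Lean document; each statement's English description precedes it below -/
import Mathlib

section
/- The absolute value of the determinant of the n×n matrix with (j,k) entry exp(iπ(j-1)(k-1)/n) equals 2^{n(n-1)/2} · ∏_{j=1}^{n-1} sin(jπ/(2n))^{n-j}. -/
open Finset Real

/-!
The matrix is the Vandermonde matrix of the points `ζ_j = exp(iπj/n)` on the upper unit half
circle, so its determinant has absolute value `∏_{i<j} |ζ_j - ζ_i|`. A chord between
`exp(iα)` and `exp(iβ)` with `0 ≤ β - α ≤ 2π` has length `2 sin((β - α)/2)`, so the factor for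
`i < j` depends only on `d = j - i`, a difference that occurs for exactly `n - d` pairs.
-/

theorem Complex.norm_exp_I_mul_ofReal_sub_exp_I_mul_ofReal {a b : ℝ} (hab : a ≤ b)
    (hba : b ≤ a + 2 * π) :
    ‖Complex.exp (Complex.I * b) - Complex.exp (Complex.I * a)‖ = 2 * Real.sin ((b - a) / 2) := by
  have h : Complex.exp (Complex.I * b) - Complex.exp (Complex.I * a) =
      Complex.exp (Complex.I * a) * (Complex.exp (Complex.I * ↑(b - a)) - 1) := by
    rw [mul_sub, ← Complex.exp_add]
    push_cast
    ring_nf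
  have h_sin_nonneg : 0 ≤ Real.sin ((b - a) / 2) :=
    Real.sin_nonneg_of_nonneg_of_le_pi (by linarith) (by linarith)
  rw [h, norm_mul, Complex.norm_exp_I_mul_ofReal, one_mul, Complex.norm_exp_I_mul_ofReal_sub_one,
    Real.norm_of_nonneg (by positivity)]

theorem Fin.prod_prod_Ioi_sub {M : Type*} [CommMonoid M] (n : ℕ) (g : ℕ → M) :
    ∏ i : Fin n, ∏ j ∈ Ioi i, g (j - i) = ∏ d ∈ Icc 1 (n - 1), g d ^ (n - d) := by
  have h_shift (i : ℕ) : ∏ j ∈ Ioo i n, g (j - i) = ∏ d ∈ Ioo 0 (n - i), g d := by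
    rcases le_or_gt i n with hi | hi
    · obtain ⟨k, rfl⟩ := Nat.exists_eq_add_of_le hi
      rw [show Ioo i (i + k) = (Ioo 0 k).map (addLeftEmbedding i) by simp, prod_map]
      simp
    · simp [Ioo_eq_empty_of_le hi.le, Nat.sub_eq_zero_of_le hi.le]
  calc ∏ i : Fin n, ∏ j ∈ Ioi i, g (j - i)
      = ∏ i ∈ range n, ∏ j ∈ Ioo i n, g (j - i) := by
        rw [← Fin.prod_univ_eq_prod_range]
        refine prod_congr rfl fun i _ => ?_
        rw [← Fin.map_valEmbedding_Ioi, prod_map]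
        rfl
    _ = ∏ i ∈ range n, ∏ d ∈ Ioo 0 (n - i), g d := prod_congr rfl fun i _ => h_shift i
    _ = ∏ d ∈ Icc 1 (n - 1), ∏ _i ∈ range (n - d), g d :=
        prod_comm' (s' := fun d => range (n - d)) fun i d => by
          simp only [mem_range, mem_Ioo, mem_Icc]; omega
    _ = ∏ d ∈ Icc 1 (n - 1), g d ^ (n - d) := by
        simp only [Finset.prod_const, card_range]

theorem Nat.sum_Icc_one_sub (n : ℕ) : ∑ d ∈ Icc 1 (n - 1), (n - d) = n * (n - 1) / 2 := by
  rcases n.eq_zero_or_pos with rfl | hn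
  · rfl
  have h_Icc : Icc 1 (n - 1) = Ico 1 n := by ext; simp only [mem_Icc, mem_Ico]; omega
  have h_reflect := sum_Ico_reflect id 1 n.le_succ
  rw [Nat.add_sub_cancel_left, Nat.add_sub_cancel] at h_reflect
  simp only [id] at h_reflect
  rw [h_Icc, h_reflect, ← sum_range_id, range_eq_Ico, sum_eq_sum_Ico_succ_bot hn, zero_add]

theorem abs_det_exp_matrix_general (n : ℕ) :
    ‖(Matrix.det (Matrix.of fun j k : Fin n =>
        Complex.exp (Real.pi * Complex.I * (j : ℕ) * (k : ℕ) / n)))‖ =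
      2 ^ (n * (n - 1) / 2) *
        ∏ j ∈ Finset.Icc 1 (n - 1), Real.sin (j * Real.pi / (2 * n)) ^ (n - j) := by
  set v : Fin n → ℂ := fun j => Complex.exp (Complex.I * ↑(π * j / n)) with hv
  have h_vandermonde : Matrix.of (fun j k : Fin n =>
      Complex.exp (Real.pi * Complex.I * (j : ℕ) * (k : ℕ) / n)) = Matrix.vandermonde v := by
    ext j k
    rw [Matrix.of_apply, Matrix.vandermonde_apply, hv, ← Complex.exp_nat_mul]
    push_cast
    ring_nf
  have h_factor (i j : Fin n) (hij : i < j) :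
      ‖v j - v i‖ = 2 * Real.sin ((j - i : ℕ) * π / (2 * n)) := by
    have hn : (0 : ℝ) < n := by exact_mod_cast i.pos
    have hj : (j : ℝ) ≤ n := by exact_mod_cast j.is_lt.le
    rw [Complex.norm_exp_I_mul_ofReal_sub_exp_I_mul_ofReal, Nat.cast_sub hij.le]
    · ring_nf
    · gcongr; exact_mod_cast hij.le
    · have h_le_pi : π * j / n ≤ π := by
        rw [div_le_iff₀ hn]; exact mul_le_mul_of_nonneg_left hj pi_pos.le
      have : 0 ≤ π * i / n := by positivity
      linarith [pi_pos]
  rw [h_vandermonde, Matrix.det_vandermonde, Complex.norm_prod]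
  simp_rw [Complex.norm_prod]
  rw [prod_congr rfl fun i _ => prod_congr rfl fun j hj => h_factor i j (mem_Ioi.mp hj),
    Fin.prod_prod_Ioi_sub n fun d => 2 * Real.sin (d * π / (2 * n))]
  simp only [mul_pow, prod_mul_distrib, prod_pow_eq_pow_sum, Nat.sum_Icc_one_sub]

/-- The absolute value of the determinant of the n×n matrix with (j,k) entry
`exp(iπ(j-1)(k-1)/n)` equals `2^(n(n-1)/2) · ∏_{j=1}^{n-1} sin(jπ/(2n))^(n-j)`. -/
theorem abs_det_exp_matrix (n : ℕ) (hn : 0 < n) :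
    ‖(Matrix.det (Matrix.of fun j k : Fin n =>
        Complex.exp (Real.pi * Complex.I * (j : ℕ) * (k : ℕ) / n)))‖ =
      2 ^ (n * (n - 1) / 2) *
        ∏ j ∈ Finset.Icc 1 (n - 1), Real.sin (j * Real.pi / (2 * n)) ^ (n - j) :=
  abs_det_exp_matrix_general n
end

section
/- The determinant of the n×n matrix with (i,j) entry T^{n+j-i}/(n+j-i)! (for 1 ≤ i,j ≤ n) equals T^{n²} · ∏_{j=0}^{n-1} j!/(n+j)!. -/
/-!
Write `m = n + j`. Since `m! = (m - i)! · m.descFactorial i`, the entry `T^(m-i)/(m-i)!` equals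
`T^(n-i) · (T^j/m!) · m.descFactorial i`; pulling the row factors `T^(n-i)` and column factors
`T^j/(n+j)!` out of the determinant leaves the matrix `((n+j).descFactorial i)`. Its `i`-th row
evaluates the monic degree-`i` polynomial `X(X-1)⋯(X-i+1)` at the nodes `n+j`, so its determinant
is the Vandermonde determinant of `n, n+1, …, 2n-1`, namely `∏_{j<n} j!`.
-/

open Finset Matrix Nat

theorem det_descFactorial_add (R : Type*) [CommRing R] (m n : ℕ) :
    det (of fun i j : Fin n => ((m + j).descFactorial i : R)) = ∏ j ∈ range n, (j ! : R) := by
  -- `descPochhammer` is monic of degree `k` only over a nontrivial domain, so compute over `ℤ`.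
  suffices hℤ :
      det (of fun i j : Fin n => ((m + j).descFactorial i : ℤ)) = ∏ j ∈ range n, (j ! : ℤ) by
    simpa [Int.cast_det, Matrix.map] using congrArg (Int.cast : ℤ → R) hℤ
  have hpoly : (of fun i j : Fin n => ((m + j).descFactorial i : ℤ))ᵀ =
      of fun i j : Fin n => (descPochhammer ℤ j).eval ((i : ℤ) + m) := by
    ext i j
    rw [transpose_apply, of_apply, of_apply, ← cast_add, add_comm,
      descPochhammer_eval_eq_descFactorial]
  rw [← det_transpose, hpoly, ← det_eval_matrixOfPolynomials_eq_det_vandermonde _ _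
      (descPochhammer_natDegree ℤ ·) (monic_descPochhammer ℤ ·), det_vandermonde_add]
  cases n with
  | zero => simp
  | succ n => rw [det_vandermonde_id_eq_superFactorial, ← prod_range_succ_factorial, cast_prod]

theorem pow_div_factorial_sub_eq {K : Type*} [Field K] [CharZero K] (x : K) {n i : ℕ} (j : ℕ)
    (hi : i ≤ n) :
    x ^ (n + j - i) / (n + j - i)! =
      x ^ (n - i) * (x ^ j / (n + j)! * (n + j).descFactorial i) := by
  have hfact : ((n + j)! : K) = (n + j - i)! * (n + j).descFactorial i := by
    rw [← cast_mul, factorial_mul_descFactorial (by omega)]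
  have hdesc : ((n + j).descFactorial i : K) ≠ 0 := by
    rw [cast_ne_zero, ne_eq, descFactorial_eq_zero_iff_lt]
    omega
  rw [hfact, show n + j - i = n - i + j by omega, pow_add]
  field_simp

theorem prod_range_pow_sub_mul_prod_range_pow {M : Type*} [CommMonoid M] (x : M) (n : ℕ) :
    (∏ i ∈ range n, x ^ (n - i)) * ∏ i ∈ range n, x ^ i = x ^ (n ^ 2) := by
  rw [← prod_mul_distrib, prod_congr rfl fun i hi => by
      rw [← pow_add, Nat.sub_add_cancel (mem_range.mp hi).le],
    prod_const, card_range, ← pow_mul, sq]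

/-- The determinant of the n×n matrix with (i,j) entry `T^(n+j-i)/(n+j-i)!`
(indices zero-based, so the entry is `T^(n+j-i)/(n+j-i)!` with `0 ≤ i,j ≤ n-1`)
equals `T^(n²) · ∏_{j=0}^{n-1} j!/(n+j)!`. -/
theorem det_factorial_matrix (n : ℕ) (T : ℝ) :
    Matrix.det (Matrix.of fun i j : Fin n =>
        T ^ (n + (j : ℕ) - (i : ℕ)) / (Nat.factorial (n + (j : ℕ) - (i : ℕ)) : ℝ)) =
      T ^ (n ^ 2) * ∏ j ∈ Finset.range n,
        (Nat.factorial j : ℝ) / (Nat.factorial (n + j) : ℝ) := by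
  have hfactor : (of fun i j : Fin n => T ^ (n + (j : ℕ) - i) / ((n + (j : ℕ) - i)! : ℝ)) =
      of fun i j : Fin n => T ^ (n - (i : ℕ)) *
        (of fun i j : Fin n => T ^ (j : ℕ) / ((n + (j : ℕ))! : ℝ) *
          (of fun i j : Fin n => ((n + (j : ℕ)).descFactorial i : ℝ)) i j) i j := by
    ext i j
    exact pow_div_factorial_sub_eq T j i.isLt.le
  rw [hfactor, det_mul_column, det_mul_row, det_descFactorial_add,
    Fin.prod_univ_eq_prod_range (fun i => T ^ (n - i)),
    Fin.prod_univ_eq_prod_range (fun j => T ^ j / ((n + j)! : ℝ)),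
    ← prod_range_pow_sub_mul_prod_range_pow T n, prod_div_distrib, prod_div_distrib]
  ring
end

section
/- The determinant of the n×n matrix with (i,j) entry equal to the binomial coefficient C(n+j-1, i-1) (for 1 ≤ i,j ≤ n) equals 1. -/
/-!
Vandermonde's identity `C(m + j, i) = ∑ₖ C(m, i - k) C(j, k)` factors the matrix
`(C(m + j, i))ᵢⱼ` as the lower unitriangular Toeplitz matrix `(C(m, i - k))ᵢₖ` times the
upper unitriangular Pascal matrix `(C(j, k))ₖⱼ`; both factors have determinant `1`.
-/

open Finset

theorem Nat.add_choose_eq_sum_range (m j i : ℕ) :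
    (m + j).choose i = ∑ k ∈ range (i + 1), m.choose (i - k) * j.choose k := by
  rw [add_comm, Nat.add_choose_eq,
    Nat.sum_antidiagonal_eq_sum_range_succ (fun a b => j.choose a * m.choose b)]
  exact sum_congr rfl fun k _ => mul_comm _ _

namespace Matrix

variable (R : Type*) [CommRing R] (n : ℕ)

def pascalUpper : Matrix (Fin n) (Fin n) R :=
  of fun k j => (Nat.choose j k : R)

/-- The guard `k ≤ i` is needed because `i - k` truncates to `0` in `ℕ`. -/
def binomialToeplitz (m : ℕ) : Matrix (Fin n) (Fin n) R :=
  of fun i k => if (k : ℕ) ≤ i then (Nat.choose m (i - k) : R) else 0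

variable {R n}

theorem pascalUpper_isUpperTriangular : (pascalUpper R n).IsUpperTriangular := by
  intro k j (hjk : j < k)
  simp [pascalUpper, Nat.choose_eq_zero_of_lt (Fin.lt_def.mp hjk)]

theorem det_pascalUpper : (pascalUpper R n).det = 1 := by
  rw [det_of_isUpperTriangular pascalUpper_isUpperTriangular]
  exact prod_eq_one fun i _ => by simp [pascalUpper]

theorem binomialToeplitz_isLowerTriangular (m : ℕ) :
    (binomialToeplitz R n m).IsLowerTriangular := by
  intro i k (hik : i < k)
  simp [binomialToeplitz, not_le.mpr hik]

theorem det_binomialToeplitz (m : ℕ) : (binomialToeplitz R n m).det = 1 := by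
  rw [det_of_isLowerTriangular _ (binomialToeplitz_isLowerTriangular m)]
  exact prod_eq_one fun i _ => by simp [binomialToeplitz]

theorem binomialToeplitz_mul_pascalUpper (m : ℕ) :
    binomialToeplitz R n m * pascalUpper R n =
      of fun i j : Fin n => (Nat.choose (m + j) i : R) := by
  ext i j
  simp only [mul_apply, binomialToeplitz, pascalUpper, of_apply]
  rw [Nat.add_choose_eq_sum_range, Nat.cast_sum,
    Fin.sum_univ_eq_sum_range
      (fun k => (if k ≤ i then (m.choose (i - k) : R) else 0) * (j : ℕ).choose k),
    ← sum_subset (range_subset_range.2 i.isLt)]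
  · refine sum_congr rfl fun k hk => ?_
    rw [if_pos (Nat.lt_succ_iff.mp (mem_range.mp hk)), Nat.cast_mul]
  · intro k _ hk
    rw [if_neg (by simpa [Nat.lt_succ_iff] using hk), zero_mul]

theorem det_of_choose_add (m : ℕ) :
    (of fun i j : Fin n => (Nat.choose (m + j) i : R)).det = 1 := by
  rw [← binomialToeplitz_mul_pascalUpper, det_mul, det_binomialToeplitz, det_pascalUpper,
    one_mul]

end Matrix

/-- The determinant of the n×n matrix with (i,j) entry `C(n+j-1, i-1)` for `1 ≤ i,j ≤ n`
(here zero-indexed: entry `C(n+j, i)` for `0 ≤ i,j ≤ n-1`) equals 1. -/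
theorem det_binomial_matrix (n : ℕ) :
    Matrix.det (Matrix.of fun i j : Fin n => (Nat.choose (n + (j : ℕ)) (i : ℕ) : ℤ)) = 1 :=
  Matrix.det_of_choose_add n
end

section
/- The sum over k ≥ 1 of 2·[1 + k·log(1 - 1/(2k)) - k·log(1 + 1/(2k))] converges and equals -1 + log 2. -/
/-!
Summation by parts turns the `N`-th partial sum into
`2N + 2 ∑_{k<N} log (2k+1) - 2N log (2N+1)`, and `∏_{k<N} (2k+1) = (2N)! / (2^N N!)`.
Writing the factorials through `stirlingSeq`, the partial sum becomes
`2 log s(2N) - 2 log s(N) + log 2 - 2N log (1 + 1/(2N))`, which tends to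
`2 log √π - 2 log √π + log 2 - 1`. The terms are nonpositive because
`log (1 + x) - log (1 - x) ≥ 2x`, so the limit of the partial sums is the sum of the series.
-/

open Real Filter Finset Topology Stirling
open scoped Nat

noncomputable def logSeriesTerm (n : ℝ) : ℝ :=
  2 * (1 + n * log (1 - 1 / (2 * n)) - n * log (1 + 1 / (2 * n)))

lemma two_mul_le_log_one_add_sub_log_one_sub {x : ℝ} (hx₀ : 0 ≤ x) (hx₁ : x < 1) :
    2 * x ≤ log (1 + x) - log (1 - x) := by
  have h := hasSum_log_sub_log_of_abs_lt_one (abs_lt.2 ⟨by linarith, hx₁⟩)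
  simpa using le_hasSum h 0 fun j _ ↦ by positivity

lemma logSeriesTerm_nonpos {n : ℝ} (hn : 1 / 2 < n) : logSeriesTerm n ≤ 0 := by
  have hn₀ : 0 < n := by linarith
  have hx : 1 / (2 * n) < 1 := by rw [div_lt_one (by positivity)]; linarith
  calc logSeriesTerm n
      = 2 * (1 - n * (log (1 + 1 / (2 * n)) - log (1 - 1 / (2 * n)))) := by
        rw [logSeriesTerm]; ring
    _ ≤ 2 * (1 - n * (2 * (1 / (2 * n)))) := by
        gcongr; exact two_mul_le_log_one_add_sub_log_one_sub (by positivity) hx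
    _ = 0 := by field_simp; ring

lemma sum_range_log_two_mul_add_one (N : ℕ) :
    ∑ k ∈ range N, log (2 * k + 1) = log (2 * N)! - N * log 2 - log N ! := by
  induction N with
  | zero => simp
  | succ N ih =>
    have h2N : (2 * (N + 1))! = (2 * N + 1) * (2 * (N + 1)) * (2 * N)! := by
      rw [show 2 * (N + 1) = 2 * N + 1 + 1 by ring, Nat.factorial_succ, Nat.factorial_succ]; ring
    rw [sum_range_succ, ih, h2N, Nat.factorial_succ]
    push_cast
    rw [log_mul (by positivity) (by positivity), log_mul (by positivity) (by positivity),
      log_mul (by positivity) (by positivity), log_mul (by positivity) (by positivity)]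
    ring

lemma sum_range_logSeriesTerm (N : ℕ) :
    ∑ k ∈ range N, logSeriesTerm (k + 1) =
      2 * N + 2 * ∑ k ∈ range N, log (2 * k + 1) - 2 * N * log (2 * N + 1) := by
  induction N with
  | zero => simp
  | succ N ih =>
    have h₁ : 1 - 1 / (2 * ((N : ℝ) + 1)) = (2 * N + 1) / (2 * (N + 1)) := by field_simp; ring
    have h₂ : 1 + 1 / (2 * ((N : ℝ) + 1)) = (2 * (N + 1) + 1) / (2 * (N + 1)) := by field_simp
    rw [sum_range_succ, sum_range_succ, ih, logSeriesTerm, h₁, h₂,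
      log_div (by positivity) (by positivity), log_div (by positivity) (by positivity)]
    push_cast
    ring

lemma sum_range_logSeriesTerm_eq_log_stirlingSeq {N : ℕ} (hN : N ≠ 0) :
    ∑ k ∈ range N, logSeriesTerm (k + 1) =
      2 * log (stirlingSeq (2 * N)) - 2 * log (stirlingSeq N) + log 2
        - 2 * N * log (1 + 1 / (2 * N)) := by
  have h₁ : 1 + 1 / (2 * (N : ℝ)) = (2 * N + 1) / (2 * N) := by field_simp
  rw [sum_range_logSeriesTerm, sum_range_log_two_mul_add_one, log_stirlingSeq_formula,
    log_stirlingSeq_formula, h₁, log_div (by positivity) (by positivity)]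
  push_cast
  rw [show (2 : ℝ) * (2 * N) = 2 * 2 * N by ring, log_mul (by positivity) (by positivity),
    log_mul (by positivity) (by positivity), log_mul (by positivity) (by positivity),
    log_div (by positivity) (by positivity), log_div (by positivity) (by positivity),
    log_mul (by positivity) (by positivity), log_exp]
  ring

lemma tendsto_sum_range_logSeriesTerm :
    Tendsto (fun N : ℕ ↦ ∑ k ∈ range N, logSeriesTerm (k + 1)) atTop (𝓝 (-1 + log 2)) := by
  have hs : Tendsto (fun n ↦ log (stirlingSeq n)) atTop (𝓝 (log √π)) :=
    ((continuousAt_log (by positivity)).tendsto).comp tendsto_stirlingSeq_sqrt_pi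
  have h2N : Tendsto (fun N : ℕ ↦ 2 * N) atTop atTop :=
    tendsto_id.const_mul_atTop' two_pos
  have hlog : Tendsto (fun N : ℕ ↦ 2 * (N : ℝ) * log (1 + 1 / (2 * N))) atTop (𝓝 1) :=
    (tendsto_mul_log_one_add_div_atTop 1).comp <|
      tendsto_natCast_atTop_atTop.const_mul_atTop two_pos
  have h := (((hs.comp h2N).const_mul 2).sub (hs.const_mul 2)).add_const (log 2) |>.sub hlog
  rw [show 2 * log √π - 2 * log √π + log 2 - 1 = -1 + log 2 by ring] at h
  refine h.congr' ?_
  filter_upwards [eventually_ne_atTop 0] with N hN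
  exact (sum_range_logSeriesTerm_eq_log_stirlingSeq hN).symm

/-- `∑_{k≥1} 2·[1 + k log(1 - 1/(2k)) - k log(1 + 1/(2k))] = -1 + log 2`. -/
theorem sum_log_series_log2 :
    HasSum (fun k : ℕ =>
        2 * (1 + ((k : ℝ) + 1) * Real.log (1 - 1 / (2 * ((k : ℝ) + 1)))
          - ((k : ℝ) + 1) * Real.log (1 + 1 / (2 * ((k : ℝ) + 1)))))
      (-1 + Real.log 2) := by
  change HasSum (fun k : ℕ ↦ logSeriesTerm (k + 1)) _
  have hnonneg (k : ℕ) : 0 ≤ -logSeriesTerm (k + 1) :=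
    neg_nonneg.2 (logSeriesTerm_nonpos (by linarith [k.cast_nonneg (α := ℝ)]))
  have h := (hasSum_iff_tendsto_nat_of_nonneg hnonneg _).2
    (by simpa only [sum_neg_distrib] using tendsto_sum_range_logSeriesTerm.neg)
  simpa only [neg_neg] using h.neg
end

section
/- For all x in (0, π/2], it holds that 1/x - (4/π²)·x ≤ cot(x) ≤ 1/x. -/
/-!
Euler's partial fraction expansion of the cotangent gives, for `0 < x < π`,
`(1/x - cot x)/x = ∑_{n ≥ 1} 2/(n²π² - x²)`, a sum of positive terms each increasing in `x`.
Nonnegativity of the sum is the upper bound `cot x ≤ 1/x`; monotonicity, compared with the value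
`4/π²` at `x = π/2` (where `cot` vanishes), is the lower bound.
-/

open Real

theorem Real.hasSum_cot_sub_inv {x : ℝ} (hx : sin x ≠ 0) :
    HasSum (fun n : ℕ => 1 / (x - (n + 1) * π) + 1 / (x + (n + 1) * π)) (cot x - 1 / x) := by
  have hz : ((x / π : ℝ) : ℂ) ∈ Complex.integerComplement := by
    rintro ⟨n, hn⟩
    refine hx (sin_eq_zero_iff.2 ⟨n, ?_⟩)
    have : (n : ℝ) = x / π := by exact_mod_cast hn
    rw [this, div_mul_cancel₀ _ pi_ne_zero]
  have h := (summable_cotTerm hz).hasSum.div_const π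
  rw [← cot_series_rep' hz] at h
  have hπ : (π : ℂ) ≠ 0 := by exact_mod_cast pi_ne_zero
  rw [← Complex.hasSum_ofReal]
  push_cast at h ⊢
  have hterm : (fun n : ℕ => 1 / ((x : ℂ) - (n + 1) * π) + 1 / (x + (n + 1) * π)) =
      fun n => cotTerm (x / π) n / π := by
    funext n
    simp only [cotTerm]
    field_simp
  have hsum : Complex.cot x - 1 / x = (π * Complex.cot (π * (x / π)) - 1 / (x / π)) / π := by
    rw [mul_div_cancel₀ _ hπ]
    field_simp
  rw [hterm, hsum]
  exact h

theorem Real.hasSum_inv_sub_cot_div {x : ℝ} (hx : sin x ≠ 0) :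
    HasSum (fun n : ℕ => 2 / (((n + 1) * π) ^ 2 - x ^ 2)) ((1 / x - cot x) / x) := by
  have hx0 : x ≠ 0 := by rintro rfl; simp at hx
  have hterm (n : ℕ) : 2 / (((n + 1) * π) ^ 2 - x ^ 2) =
      -(1 / (x - (n + 1) * π) + 1 / (x + (n + 1) * π)) / x := by
    have hsq : ((n + 1) * π) ^ 2 - x ^ 2 ≠ 0 := by
      intro h
      refine hx (sin_eq_zero_iff.2 ?_)
      rcases sq_eq_sq_iff_eq_or_eq_neg.1 (sub_eq_zero.1 h).symm with h | h
      · exact ⟨n + 1, by rw [h]; push_cast; ring⟩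
      · exact ⟨-(n + 1), by rw [h]; push_cast; ring⟩
    have hprod : (x + (n + 1) * π) * (x - (n + 1) * π) ≠ 0 := by
      rwa [← sq_sub_sq, ← neg_sub, neg_ne_zero]
    have h1 := right_ne_zero_of_mul hprod
    have h2 := left_ne_zero_of_mul hprod
    rw [div_eq_div_iff hsq hx0]
    field_simp
    ring
  simp_rw [hterm, ← neg_sub (cot x)]
  exact (hasSum_cot_sub_inv hx).neg.div_const x

theorem Real.inv_sub_cot_div_nonneg {x : ℝ} (hx0 : 0 < x) (hxπ : x < π) :
    0 ≤ (1 / x - cot x) / x := by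
  refine (hasSum_inv_sub_cot_div (sin_pos_of_pos_of_lt_pi hx0 hxπ).ne').nonneg fun n => ?_
  have : x < (n + 1) * π := by nlinarith [(n.cast_nonneg : (0 : ℝ) ≤ n), pi_pos]
  have : x ^ 2 < ((n + 1) * π) ^ 2 := by gcongr
  exact div_nonneg zero_le_two (sub_nonneg.2 this.le)

theorem Real.inv_sub_cot_div_le {x y : ℝ} (hx0 : 0 < x) (hxy : x ≤ y) (hyπ : y < π) :
    (1 / x - cot x) / x ≤ (1 / y - cot y) / y := by
  refine hasSum_le (fun n => ?_)
    (hasSum_inv_sub_cot_div (sin_pos_of_pos_of_lt_pi hx0 (by linarith)).ne')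
    (hasSum_inv_sub_cot_div (sin_pos_of_pos_of_lt_pi (by linarith) hyπ).ne')
  have : y < (n + 1) * π := by nlinarith [(n.cast_nonneg : (0 : ℝ) ≤ n), pi_pos]
  have : y ^ 2 < ((n + 1) * π) ^ 2 := by gcongr; linarith
  gcongr

/-- For all `x ∈ (0, π/2]`: `1/x - (4/π²)x ≤ cot x ≤ 1/x`. -/
theorem cot_bounds (x : ℝ) (hx : x ∈ Set.Ioc 0 (Real.pi / 2)) :
    1 / x - (4 / Real.pi ^ 2) * x ≤ Real.cos x / Real.sin x ∧
      Real.cos x / Real.sin x ≤ 1 / x := by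
  obtain ⟨hx0, hx2⟩ := hx
  have hπ2 : π / 2 < π := by linarith [pi_pos]
  rw [← cot_eq_cos_div_sin]
  have hupper := inv_sub_cot_div_nonneg hx0 (hx2.trans_lt hπ2)
  have hlower := inv_sub_cot_div_le hx0 hx2 hπ2
  have hvalue : (1 / (π / 2) - cot (π / 2)) / (π / 2) = 4 / π ^ 2 := by
    rw [cot_eq_cos_div_sin, cos_pi_div_two, zero_div]
    field_simp
    ring
  rw [hvalue, div_le_iff₀ hx0] at hlower
  rw [le_div_iff₀ hx0, zero_mul, sub_nonneg] at hupper
  exact ⟨by linarith, hupper⟩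
end

section
/- As n → ∞, log(∏_{j=0}^{n-1} j! / ∏_{j=0}^{n-1} (n+j)!) = -n² log n + (3/2 - 2 log 2) n² - (1/12) log n + O(1). More precisely, for all sufficiently large n this quantity lies between -n² log n + (3/2 - 2 log 2)n² - (1/12) log n + (1/12) log 2 - log A - 1/12 - 1/(320 n²) and the same expression with -1/12 - 1/(320n²) replaced by 1/6 + 1/(320 n²). -/
/-!
Since `∏_{j<n} j! · ∏_{k≤n} k^k = (n!)^n`, the quantity is `2 log ∏_{j<n} j! - log ∏_{j<2n} j!`,
and Stirling's formula `log m! = (m + 1/2) log m - m + (1/2) log 2π + s m` together with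
`log ∏_{k≤m} k^k = (m²/2 + m/2 + 1/12) log m - m²/4 + d m` turns it into the main terms plus
`d (2n) - 2 d n + 2n (s n - s (2n))`, where `s = stirlingError` and `d = glaisherError`.
The hypothesis says `d m → log A`, so `d (2n) - 2 d n → -log A`, while Robbins' bound
`s m - s (m+1) ≤ 1/(12 m (m+1))` telescopes to `0 ≤ 2n (s n - s (2n)) ≤ 1/12`.
That `A > 0`, so that `log A` is meaningful, comes from summing Stirling's formula:
`2 d n = (1/12) log n + (1/4) log 2π + (n + 1/2) s n - ∑_{j≤n} s j` is bounded below because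
`0 ≤ s j ≤ 1/(12 j)` and the harmonic sum is at most `1 + log n`.
-/

open Finset Real Filter Stirling
open scoped Nat Topology

def hyperfactorial (n : ℕ) : ℕ := ∏ k ∈ Icc 1 n, k ^ k

theorem hyperfactorial_pos (n : ℕ) : 0 < hyperfactorial n :=
  prod_pos fun k hk => pow_pos (mem_Icc.mp hk).1 k

theorem prod_range_factorial_mul_hyperfactorial (n : ℕ) :
    (∏ j ∈ range n, j !) * hyperfactorial n = n ! ^ n := by
  induction n with
  | zero => rfl
  | succ n ih =>
    rw [hyperfactorial, prod_range_succ, prod_Icc_succ_top n.succ_pos, ← hyperfactorial,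
      Nat.factorial_succ]
    calc _ = ((∏ j ∈ range n, j !) * hyperfactorial n) * n ! * (n + 1) ^ (n + 1) := by ring
      _ = _ := by rw [ih, mul_pow, pow_succ]; ring

theorem cast_hyperfactorial (n : ℕ) :
    (hyperfactorial n : ℝ) = ∏ k ∈ Icc 1 n, (k : ℝ) ^ k := by
  push_cast [hyperfactorial]; rfl

theorem log_factorial_succ (n : ℕ) : log ((n + 1)! : ℝ) = log (n + 1) + log n ! := by
  rw [Nat.factorial_succ, Nat.cast_mul, log_mul (by positivity) (by positivity)]
  push_cast; rfl

theorem log_hyperfactorial_succ (n : ℕ) :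
    log (hyperfactorial (n + 1) : ℝ) = log (hyperfactorial n) + (n + 1) * log (n + 1) := by
  rw [hyperfactorial, prod_Icc_succ_top n.succ_pos, ← hyperfactorial, Nat.cast_mul,
    log_mul (by exact_mod_cast (hyperfactorial_pos n).ne') (by positivity), Nat.cast_pow, log_pow]
  push_cast; rfl

theorem log_prod_range_factorial (n : ℕ) :
    log (∏ j ∈ range n, (j ! : ℝ)) = n * log n ! - log (hyperfactorial n) := by
  have h := congrArg (fun m : ℕ => log (m : ℝ)) (prod_range_factorial_mul_hyperfactorial n)
  simp only [Nat.cast_mul, Nat.cast_pow, Nat.cast_prod] at h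
  rw [log_mul (by positivity) (by exact_mod_cast (hyperfactorial_pos n).ne'), log_pow] at h
  linarith

noncomputable def stirlingError (n : ℕ) : ℝ :=
  log n ! - ((n + 1 / 2) * log n - n + log (2 * π) / 2)

theorem stirlingError_eq_log_stirlingSeq_sub {n : ℕ} (hn : n ≠ 0) :
    stirlingError n = log (stirlingSeq n) - log √π := by
  have hn' : (n : ℝ) ≠ 0 := by exact_mod_cast hn
  rw [log_stirlingSeq_formula, stirlingError, log_mul two_ne_zero hn', log_div hn' (exp_ne_zero 1),
    log_exp, log_sqrt pi_pos.le, log_mul two_ne_zero pi_ne_zero]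
  ring

theorem tendsto_stirlingError : Tendsto stirlingError atTop (𝓝 0) := by
  have h := (tendsto_stirlingSeq_sqrt_pi.log (by positivity)).sub_const (log √π)
  rw [sub_self] at h
  refine h.congr' ?_
  filter_upwards [eventually_ne_atTop 0] with n hn
  exact (stirlingError_eq_log_stirlingSeq_sub hn).symm

theorem stirlingError_nonneg {n : ℕ} (hn : n ≠ 0) : 0 ≤ stirlingError n := by
  rw [stirlingError_eq_log_stirlingSeq_sub hn, sub_nonneg]
  exact log_le_log (by positivity) (sqrt_pi_le_stirlingSeq hn)

theorem stirlingError_le_of_le {n m : ℕ} (hn : n ≠ 0) (hnm : n ≤ m) :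
    stirlingError m ≤ stirlingError n := by
  obtain ⟨a, rfl⟩ := Nat.exists_eq_succ_of_ne_zero hn
  obtain ⟨b, rfl⟩ := Nat.exists_eq_succ_of_ne_zero (by omega : m ≠ 0)
  rw [stirlingError_eq_log_stirlingSeq_sub a.succ_ne_zero,
    stirlingError_eq_log_stirlingSeq_sub b.succ_ne_zero]
  exact sub_le_sub_right (log_stirlingSeq'_antitone (Nat.succ_le_succ_iff.mp hnm)) _

theorem stirlingError_sub_succ_le {n : ℕ} (hn : n ≠ 0) :
    stirlingError n - stirlingError (n + 1) ≤ 1 / (12 * n * (n + 1)) := by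
  rw [stirlingError_eq_log_stirlingSeq_sub hn, stirlingError_eq_log_stirlingSeq_sub n.succ_ne_zero]
  linarith [log_stirlingSeq_sdiff_le n]

theorem stirlingError_sub_le {n m : ℕ} (hn : n ≠ 0) (hnm : n ≤ m) :
    stirlingError n - stirlingError m ≤ 1 / (12 * n) - 1 / (12 * m) := by
  induction m, hnm using Nat.le_induction with
  | base => simp
  | succ m hnm ih =>
    have hm : (m : ℝ) ≠ 0 := by exact_mod_cast (by omega : m ≠ 0)
    have hstep := stirlingError_sub_succ_le (by omega : m ≠ 0)
    have htele : 1 / (12 * m * (m + 1)) = 1 / (12 * m) - 1 / (12 * (m + 1) : ℝ) := by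
      field_simp; ring
    push_cast
    linarith

theorem stirlingError_le {n : ℕ} (hn : n ≠ 0) : stirlingError n ≤ 1 / (12 * n) := by
  have h : Tendsto (fun m => stirlingError n - stirlingError m) atTop (𝓝 (stirlingError n)) := by
    simpa using tendsto_stirlingError.const_sub (stirlingError n)
  refine le_of_tendsto h ?_
  filter_upwards [eventually_ge_atTop n] with m hm
  have : 0 ≤ 1 / (12 * (m : ℝ)) := by positivity
  linarith [stirlingError_sub_le hn hm]

theorem sum_stirlingError_le (n : ℕ) :
    ∑ j ∈ Icc 1 n, stirlingError j ≤ (1 + log n) / 12 :=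
  calc ∑ j ∈ Icc 1 n, stirlingError j ≤ ∑ j ∈ Icc 1 n, (j : ℝ)⁻¹ / 12 := by
        refine sum_le_sum fun j hj => (stirlingError_le ?_).trans_eq ?_
        · exact Nat.one_le_iff_ne_zero.mp (mem_Icc.mp hj).1
        · ring
    _ = harmonic n / 12 := by rw [← sum_div, harmonic_eq_sum_Icc]; push_cast; rfl
    _ ≤ (1 + log n) / 12 := by gcongr; exact harmonic_le_one_add_log n

theorem two_mul_mul_stirlingError_sub_mem_Icc {n : ℕ} (hn : n ≠ 0) :
    2 * n * (stirlingError n - stirlingError (2 * n)) ∈ Set.Icc 0 (1 / 12) := by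
  refine ⟨mul_nonneg (by positivity) (sub_nonneg.mpr (stirlingError_le_of_le hn (by omega))), ?_⟩
  calc 2 * n * (stirlingError n - stirlingError (2 * n))
      ≤ 2 * n * (1 / (12 * n) - 1 / (12 * (2 * n : ℕ))) :=
        mul_le_mul_of_nonneg_left (stirlingError_sub_le hn (by omega)) (by positivity)
    _ = 1 / 12 := by push_cast; field_simp; ring

noncomputable def glaisherError (n : ℕ) : ℝ :=
  log (hyperfactorial n) - ((n ^ 2 / 2 + n / 2 + 1 / 12) * log n - n ^ 2 / 4)

theorem two_mul_log_hyperfactorial (n : ℕ) :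
    2 * log (hyperfactorial n : ℝ) = (n + 1 / 2) * log n ! + n * (n + 1) / 2
      - n * log (2 * π) / 2 - ∑ j ∈ Icc 1 n, stirlingError j := by
  induction n with
  | zero => simp [hyperfactorial]
  | succ n ih =>
    have hs : stirlingError (n + 1) = log (n + 1) + log n !
        - ((n + 1 + 1 / 2) * log (n + 1) - (n + 1) + log (2 * π) / 2) := by
      rw [stirlingError, log_factorial_succ]; push_cast; ring
    rw [sum_Icc_succ_top (by omega), hs, log_hyperfactorial_succ, log_factorial_succ]
    push_cast
    linear_combination ih

theorem two_mul_glaisherError (n : ℕ) :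
    2 * glaisherError n = log n / 12 + log (2 * π) / 4 + (n + 1 / 2) * stirlingError n
      - ∑ j ∈ Icc 1 n, stirlingError j := by
  rw [glaisherError, stirlingError]
  linear_combination two_mul_log_hyperfactorial n

theorem le_glaisherError {n : ℕ} (hn : n ≠ 0) : log (2 * π) / 8 - 1 / 24 ≤ glaisherError n := by
  have hs := mul_nonneg (by positivity : (0 : ℝ) ≤ n + 1 / 2) (stirlingError_nonneg hn)
  linarith [two_mul_glaisherError n, sum_stirlingError_le n]

theorem exp_glaisherError {n : ℕ} (hn : n ≠ 0) :
    exp (glaisherError n) = hyperfactorial n /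
      ((n : ℝ) ^ ((n : ℝ) ^ 2 / 2 + n / 2 + 1 / 12) * exp (-(n : ℝ) ^ 2 / 4)) := by
  rw [glaisherError, exp_sub, exp_log (by exact_mod_cast hyperfactorial_pos n), exp_sub,
    rpow_def_of_pos (by positivity), mul_comm (log _), neg_div, exp_neg, div_eq_mul_inv (exp _)]

theorem tendsto_glaisherError {A : ℝ}
    (hA : Tendsto (fun n => exp (glaisherError n)) atTop (𝓝 A)) :
    Tendsto glaisherError atTop (𝓝 (log A)) := by
  -- the lower bound on `glaisherError` is what rules out `A = 0`
  have hA0 : 0 < A := by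
    refine (exp_pos (log (2 * π) / 8 - 1 / 24)).trans_le (ge_of_tendsto hA ?_)
    filter_upwards [eventually_ne_atTop 0] with n hn
    exact exp_le_exp.mpr (le_glaisherError hn)
  simpa using hA.log hA0.ne'

theorem log_prod_factorial_ratio_eq {n : ℕ} (hn : n ≠ 0) :
    log ((∏ j ∈ range n, (j ! : ℝ)) / ∏ j ∈ range n, ((n + j)! : ℝ)) =
      -(n : ℝ) ^ 2 * log n + (3 / 2 - 2 * log 2) * (n : ℝ) ^ 2 - (1 / 12) * log n
        + (1 / 12) * log 2 + (glaisherError (2 * n) - 2 * glaisherError n)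
        + 2 * n * (stirlingError n - stirlingError (2 * n)) := by
  have hsplit := congrArg log (prod_range_add (fun j => (j ! : ℝ)) n n)
  rw [← two_mul, log_mul (by positivity) (by positivity)] at hsplit
  have hP2n := log_prod_range_factorial (2 * n)
  have h2n : log (2 * n : ℝ) = log 2 + log n := log_mul two_ne_zero (by positivity)
  rw [log_div (by positivity) (by positivity), glaisherError, glaisherError, stirlingError,
    stirlingError]
  push_cast at hP2n ⊢
  rw [h2n]
  linear_combination hsplit + 2 * log_prod_range_factorial n - hP2n

/-- As `n → ∞`,
`log(∏_{j=0}^{n-1} j! / ∏_{j=0}^{n-1} (n+j)!) = -n² log n + (3/2 - 2 log 2)n² - (1/12) log n + O(1)`;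
more precisely, for all sufficiently large `n` this quantity lies between
`-n² log n + (3/2 - 2 log 2)n² - (1/12) log n + (1/12) log 2 - log A - 1/12 - 1/(320 n²)` and
`-n² log n + (3/2 - 2 log 2)n² - (1/12) log n + (1/12) log 2 - log A + 1/6 + 1/(320 n²)`,
where `A` is the Glaisher–Kinkelin constant, characterized here as the limit of
`(∏_{k=1}^n k^k) / (n^(n²/2 + n/2 + 1/12) e^(-n²/4))`. -/
theorem log_prod_factorial_ratio_bounds (A : ℝ)
    (hA : Filter.Tendsto (fun n : ℕ =>
        (∏ k ∈ Finset.Icc 1 n, (k : ℝ) ^ (k : ℕ)) /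
          ((n : ℝ) ^ ((n : ℝ) ^ 2 / 2 + (n : ℝ) / 2 + 1 / 12) * Real.exp (-(n : ℝ) ^ 2 / 4)))
      Filter.atTop (nhds A)) :
    ∃ N : ℕ, ∀ n : ℕ, N ≤ n →
      (-(n : ℝ) ^ 2 * Real.log n + (3 / 2 - 2 * Real.log 2) * (n : ℝ) ^ 2
          - (1 / 12) * Real.log n + (1 / 12) * Real.log 2 - Real.log A - 1 / 12
          - 1 / (320 * (n : ℝ) ^ 2)
        ≤ Real.log ((∏ j ∈ Finset.range n, (Nat.factorial j : ℝ)) /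
            ∏ j ∈ Finset.range n, (Nat.factorial (n + j) : ℝ))) ∧
      (Real.log ((∏ j ∈ Finset.range n, (Nat.factorial j : ℝ)) /
            ∏ j ∈ Finset.range n, (Nat.factorial (n + j) : ℝ))
        ≤ -(n : ℝ) ^ 2 * Real.log n + (3 / 2 - 2 * Real.log 2) * (n : ℝ) ^ 2
          - (1 / 12) * Real.log n + (1 / 12) * Real.log 2 - Real.log A + 1 / 6
          + 1 / (320 * (n : ℝ) ^ 2)) := by
  have hd : Tendsto glaisherError atTop (𝓝 (log A)) := by
    refine tendsto_glaisherError (hA.congr' ?_)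
    filter_upwards [eventually_ne_atTop 0] with n hn
    rw [exp_glaisherError hn, cast_hyperfactorial]
  have hE : Tendsto (fun n => glaisherError (2 * n) - 2 * glaisherError n) atTop
      (𝓝 (log A - 2 * log A)) :=
    (hd.comp (tendsto_id.const_mul_atTop' two_pos)).sub (hd.const_mul 2)
  have hnear : Set.Ioo (-log A - 1 / 12) (-log A + 1 / 12) ∈ 𝓝 (log A - 2 * log A) :=
    Ioo_mem_nhds (by linarith) (by linarith)
  obtain ⟨N, hN⟩ := eventually_atTop.mp ((hE.eventually hnear).and (eventually_ne_atTop 0))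
  refine ⟨N, fun n hn => ?_⟩
  obtain ⟨⟨hE_lo, hE_hi⟩, hn0⟩ := hN n hn
  obtain ⟨hT_lo, hT_hi⟩ := two_mul_mul_stirlingError_sub_mem_Icc hn0
  have hε : 0 ≤ 1 / (320 * (n : ℝ) ^ 2) := by positivity
  rw [log_prod_factorial_ratio_eq hn0]
  constructor <;> linarith
end

section
/- Define F(n) = 2^{n(n-1)/2} ∏_{j=1}^{n-1} sin(jπ/(2n))^{n-j}. Then for every integer n ≥ 1, -log F(n) ≥ -∫_1^n (n-x) log(sin(πx/(2n))) dx - (1/2)(n-1) log(sin(π/(2n))) - (n(n-1)/2) log 2. -/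
open Finset Real intervalIntegral

/-!
On `(0, n]` the function `H x = (n - x) * -log (sin (π x / (2n)))` is the product of two
nonnegative, decreasing, convex functions, hence convex. So on each `[k, k + 1]` its integral is at
most the trapezoid value `(H k + H (k + 1)) / 2`; summing over `k = 1, …, n - 1` and using
`H n = 0` gives `∫₁ⁿ H ≤ ∑_{j=1}^{n-1} H j - H 1 / 2`, while `∑_{j=1}^{n-1} H j` is
`-log F(n) + (n(n-1)/2) log 2`.
-/

theorem Real.convexOn_neg_log_sin : ConvexOn ℝ (Set.Ioo 0 π) fun x => -log (sin x) := by
  have hpos : sin '' Set.Ioo 0 π ⊆ Set.Ioi 0 := by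
    rintro _ ⟨x, hx, rfl⟩
    exact sin_pos_of_pos_of_lt_pi hx.1 hx.2
  have hconv : Convex ℝ (sin '' Set.Ioo 0 π) :=
    (isPreconnected_Ioo.image _ continuous_sin.continuousOn).ordConnected.convex
  refine ConvexOn.comp_concaveOn (g := fun y => -log y) ?_
    (strictConcaveOn_sin_Icc.concaveOn.subset Set.Ioo_subset_Icc_self (convex_Ioo 0 π)) ?_
  · exact strictConcaveOn_log_Ioi.concaveOn.neg.subset hpos hconv
  · intro y hy z hz hyz
    exact neg_le_neg (log_le_log (hpos hy) hyz)

theorem Real.antitoneOn_neg_log_sin : AntitoneOn (fun x => -log (sin x)) (Set.Ioc 0 (π / 2)) := by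
  intro x hx y hy hxy
  refine neg_le_neg (log_le_log (sin_pos_of_pos_of_lt_pi hx.1 (by linarith [hx.2, pi_pos])) ?_)
  exact sin_le_sin_of_le_of_le_pi_div_two (by linarith [hx.1, pi_pos]) hy.2 hxy

theorem ConvexOn.integral_le_trapezoid {f : ℝ → ℝ} {a b : ℝ} (hab : a ≤ b)
    (hf : ConvexOn ℝ (Set.Icc a b) f) (hint : IntervalIntegrable f MeasureTheory.volume a b) :
    ∫ x in a..b, f x ≤ (b - a) * (f a + f b) / 2 := by
  rcases hab.eq_or_lt with rfl | hab
  · simp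
  have hba : b - a ≠ 0 := (sub_pos.2 hab).ne'
  have hchord (x : ℝ) (hx : x ∈ Set.Icc a b) :
      f x ≤ (b - x) / (b - a) * f a + (x - a) / (b - a) * f b := by
    have hx' : (b - x) / (b - a) * a + (x - a) / (b - a) * b = x := by
      field_simp; ring
    simpa only [hx', smul_eq_mul] using
      hf.2 (Set.left_mem_Icc.2 hab.le) (Set.right_mem_Icc.2 hab.le)
        (div_nonneg (sub_nonneg.2 hx.2) (sub_pos.2 hab).le)
        (div_nonneg (sub_nonneg.2 hx.1) (sub_pos.2 hab).le) (by field_simp; ring)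
  calc ∫ x in a..b, f x ≤ ∫ x in a..b, ((b - x) / (b - a) * f a + (x - a) / (b - a) * f b) :=
        integral_mono_on hab.le hint (by apply Continuous.intervalIntegrable; fun_prop) hchord
    _ = (b - a) * (f a + f b) / 2 := by
        rw [integral_add (by apply Continuous.intervalIntegrable; fun_prop)
          (by apply Continuous.intervalIntegrable; fun_prop)]
        simp only [integral_mul_const, integral_div]
        rw [integral_sub intervalIntegrable_const intervalIntegrable_id,
          integral_sub intervalIntegrable_id intervalIntegrable_const]
        simp only [integral_id, integral_const, smul_eq_mul]
        field_simp
        ring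

theorem ConvexOn.integral_le_sum_trapezoid {f : ℝ → ℝ} (a : ℝ) (m : ℕ)
    (hf : ConvexOn ℝ (Set.Icc a (a + m)) f)
    (hint : IntervalIntegrable f MeasureTheory.volume a (a + m)) :
    ∫ x in a..a + m, f x ≤ ∑ k ∈ range m, f (a + k) - f a / 2 + f (a + m) / 2 := by
  induction m with
  | zero => simp
  | succ m ih =>
    simp only [Nat.cast_succ, ← add_assoc] at hf hint ⊢
    have hsub : Set.Icc a (a + m) ⊆ Set.Icc a (a + m + 1) :=
      Set.Icc_subset_Icc_right (by linarith)
    have hsub' : Set.Icc (a + m) (a + m + 1) ⊆ Set.Icc a (a + m + 1) :=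
      Set.Icc_subset_Icc_left (by linarith [m.cast_nonneg (α := ℝ)])
    have hint' (c d : ℝ) (hcd : Set.Icc c d ⊆ Set.Icc a (a + m + 1)) (hc : c ≤ d) :
        IntervalIntegrable f MeasureTheory.volume c d :=
      hint.mono_set (by
        rwa [Set.uIcc_of_le hc, Set.uIcc_of_le (by linarith [m.cast_nonneg (α := ℝ)])])
    have hleft := ih (hf.subset hsub (convex_Icc _ _)) (hint' _ _ hsub (by simp))
    have hright := (hf.subset hsub' (convex_Icc _ _)).integral_le_trapezoid (by linarith)
      (hint' _ _ hsub' (by linarith))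
    rw [← integral_add_adjacent_intervals (hint' _ _ hsub (by simp))
      (hint' _ _ hsub' (by linarith)), sum_range_succ]
    linarith

theorem mem_Ioc_pi_mul_div_two_mul {L x : ℝ} (hL : 0 < L) (hx : x ∈ Set.Ioc 0 L) :
    π * x / (2 * L) ∈ Set.Ioc 0 (π / 2) := by
  refine ⟨by have := hx.1; positivity, ?_⟩
  rw [div_le_iff₀ (by positivity)]
  nlinarith [pi_pos, hx.2]

theorem convexOn_sub_mul_neg_log_sin {L : ℝ} (hL : 0 < L) :
    ConvexOn ℝ (Set.Ioc 0 L) fun x => (L - x) * -log (sin (π * x / (2 * L))) := by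
  have hmem (x : ℝ) (hx : x ∈ Set.Ioc 0 L) := mem_Ioc_pi_mul_div_two_mul hL hx
  have hconv : ConvexOn ℝ (Set.Ioc 0 L) fun x => -log (sin (π * x / (2 * L))) := by
    refine ((Real.convexOn_neg_log_sin.comp_linearMap (LinearMap.mulLeft ℝ (π / (2 * L)))).subset
      (fun x hx => ?_) (convex_Ioc 0 L)).congr (fun x _ => ?_)
    · have := hmem x hx
      simp only [Set.mem_preimage, LinearMap.mulLeft_apply, div_mul_eq_mul_div]
      exact ⟨this.1, this.2.trans_lt (by linarith [pi_pos])⟩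
    · simp only [Function.comp_apply, LinearMap.mulLeft_apply, div_mul_eq_mul_div]
  have hanti : AntitoneOn (fun x => -log (sin (π * x / (2 * L)))) (Set.Ioc 0 L) :=
    fun x hx y hy hxy => Real.antitoneOn_neg_log_sin (hmem x hx) (hmem y hy) (by gcongr)
  have hnonneg (x : ℝ) (hx : x ∈ Set.Ioc 0 L) : 0 ≤ -log (sin (π * x / (2 * L))) :=
    neg_nonneg.2 (log_nonpos (sin_nonneg_of_nonneg_of_le_pi (hmem x hx).1.le
      ((hmem x hx).2.trans (by linarith [pi_pos]))) (sin_le_one _))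
  exact ((convexOn_const L (convex_Ioc 0 L)).sub (concaveOn_id (convex_Ioc 0 L))).mul hconv
    (fun x hx => sub_nonneg.2 hx.2) hnonneg
    (AntitoneOn.monovaryOn (fun x _ y _ hxy => sub_le_sub_left hxy L) hanti)

theorem continuousOn_sub_mul_neg_log_sin {L : ℝ} (hL : 0 < L) :
    ContinuousOn (fun x => (L - x) * -log (sin (π * x / (2 * L)))) (Set.Ioc 0 L) := by
  refine ContinuousOn.mul (by fun_prop) (ContinuousOn.log (by fun_prop) fun x hx => ?_).neg
  have := mem_Ioc_pi_mul_div_two_mul hL hx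
  exact (sin_pos_of_pos_of_lt_pi this.1 (this.2.trans_lt (by linarith [pi_pos]))).ne'

theorem log_two_pow_mul_prod_sin (n : ℕ) :
    log ((2 : ℝ) ^ (n * (n - 1) / 2) *
        ∏ j ∈ Icc 1 (n - 1), sin ((j : ℝ) * π / (2 * n)) ^ (n - j))
      = ((n * (n - 1) / 2 : ℕ) : ℝ) * log 2
        - ∑ k ∈ range (n - 1), ((n : ℝ) - (1 + k)) * -log (sin (π * (1 + k) / (2 * n))) := by
  have hsin (j : ℕ) (hj : j ∈ Icc 1 (n - 1)) : sin ((j : ℝ) * π / (2 * n)) ≠ 0 := by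
    rw [mem_Icc] at hj
    have h1 : (1 : ℝ) ≤ j := by exact_mod_cast hj.1
    have hjn : (j : ℝ) < n := by exact_mod_cast (by omega : j < n)
    have hn : (0 : ℝ) < n := by linarith
    refine (sin_pos_of_pos_of_lt_pi (by positivity) ?_).ne'
    rw [div_lt_iff₀ (by positivity)]
    nlinarith [pi_pos]
  have hIcc : Icc 1 (n - 1) = Ico 1 n := by ext; simp only [mem_Icc, mem_Ico]; omega
  rw [log_mul (by positivity) (prod_ne_zero_iff.2 fun j hj => pow_ne_zero _ (hsin j hj)), log_pow,
    log_prod fun j hj => pow_ne_zero _ (hsin j hj), hIcc, sum_Ico_eq_sum_range, sub_eq_add_neg,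
    ← sum_neg_distrib]
  refine congrArg _ (sum_congr rfl fun k hk => ?_)
  rw [log_pow, Nat.cast_sub (by rw [mem_range] at hk; omega)]
  push_cast
  ring_nf

/-- With `F(n) = 2^(n(n-1)/2) ∏_{j=1}^{n-1} sin(jπ/(2n))^(n-j)`, for every integer `n ≥ 1`,
`-log F(n) ≥ -∫_1^n (n-x) log(sin(πx/(2n))) dx - (1/2)(n-1) log(sin(π/(2n))) - (n(n-1)/2) log 2`. -/
theorem neg_log_F_lower_bound (n : ℕ) (hn : 1 ≤ n) :
    -Real.log ((2 : ℝ) ^ (n * (n - 1) / 2) *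
        ∏ j ∈ Finset.Icc 1 (n - 1), Real.sin ((j : ℝ) * Real.pi / (2 * n)) ^ (n - j))
      ≥ -(∫ x in (1 : ℝ)..(n : ℝ), ((n : ℝ) - x) * Real.log (Real.sin (Real.pi * x / (2 * n))))
        - (1 / 2) * ((n : ℝ) - 1) * Real.log (Real.sin (Real.pi / (2 * n)))
        - ((n * (n - 1) / 2 : ℕ) : ℝ) * Real.log 2 := by
  have hL : (0 : ℝ) < n := by exact_mod_cast hn
  have hend : 1 + ((n - 1 : ℕ) : ℝ) = n := by rw [Nat.cast_sub hn]; ring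
  have hsub : Set.Icc 1 (1 + ((n - 1 : ℕ) : ℝ)) ⊆ Set.Ioc 0 n := by
    rw [hend]; exact Set.Icc_subset_Ioc_iff (by exact_mod_cast hn) |>.2 ⟨one_pos, le_rfl⟩
  have key := ((convexOn_sub_mul_neg_log_sin hL).subset hsub
    (convex_Icc _ _)).integral_le_sum_trapezoid 1 (n - 1)
    (((continuousOn_sub_mul_neg_log_sin hL).mono hsub).intervalIntegrable_of_Icc (by simp))
  rw [log_two_pow_mul_prod_sin]
  simp only [hend, sub_self, zero_mul, mul_one, mul_neg, integral_neg] at key ⊢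
  linarith
end
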